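/- Let R be a Γ-graded ring with graded stable range 1. Then R is graded directly finite: for all homogeneous x, y ∈ R, x*y = 1 implies y*x = 1. -/
import Mathlib


/-- An element of `R` is homogeneous with respect to the grading `𝒜` if it lies in some
component `𝒜 γ`. -/
def IsHomogeneousElem {Γ R : Type*} [AddGroup Γ] [Ring R]
    (𝒜 : Γ → AddSubgroup R) (x : R) : Prop :=
  ∃ γ : Γ, x ∈ 𝒜 γ

/-- `R` has graded stable range 1. -/
def GradedStableRangeOne {Γ R : Type*} [AddGroup Γ] [Ring R]
    (𝒜 : Γ → AddSubgroup R) : Prop :=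
  ∀ γ δ : Γ, ∀ a ∈ 𝒜 γ, ∀ b ∈ 𝒜 δ,
    (∃ c ∈ 𝒜 (-γ), ∃ d ∈ 𝒜 (-δ), a * c + b * d = 1) →
    ∃ y ∈ 𝒜 (-δ + γ), IsUnit (a + b * y)

/-- If a `Γ`-graded ring `R` has graded stable range 1, then `R` is graded directly finite:
for homogeneous `x, y`, `x*y = 1` implies `y*x = 1`. -/
theorem gradedDirectlyFinite_of_gradedStableRangeOne
    {Γ R : Type*} [AddGroup Γ] [DecidableEq Γ] [Ring R]
    (𝒜 : Γ → AddSubgroup R) [GradedRing 𝒜]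
    (h : GradedStableRangeOne 𝒜) :
    ∀ x y : R, IsHomogeneousElem 𝒜 x → IsHomogeneousElem 𝒜 y → x * y = 1 → y * x = 1 := by
  rintro x y ⟨γ, hx⟩ ⟨δ, hy⟩ hxy
  by_cases h1 : (1 : R) = 0
  · haveI := subsingleton_of_zero_eq_one h1.symm
    exact Subsingleton.elim _ _
  have hmem : (1 : R) ∈ 𝒜 (γ + δ) := hxy ▸ SetLike.mul_mem_graded hx hy
  have h0 : γ + δ = 0 :=
    DirectSum.degree_eq_of_mem_mem 𝒜 hmem (SetLike.one_mem_graded 𝒜) h1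
  have hγ : γ = -δ := by
    have := congrArg (· + -δ) h0
    simpa [add_assoc] using this
  have hδγ : δ + γ = 0 := by rw [hγ]; simp
  have hyx : y * x ∈ 𝒜 0 := hδγ ▸ SetLike.mul_mem_graded hy hx
  have hb : (1 : R) - y * x ∈ 𝒜 0 := sub_mem (SetLike.one_mem_graded 𝒜) hyx
  obtain ⟨z, hz, hu⟩ := h δ 0 y hy (1 - y * x) hb
    ⟨x, hγ ▸ hx, 1, by simpa using SetLike.one_mem_graded 𝒜, by rw [mul_one]; abel⟩
  obtain ⟨u, hu⟩ := hu
  have hxu : x * (y + (1 - y * x) * z) = 1 := by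
    have e : x * (y + (1 - y * x) * z) = x * y + (x - x * y * x) * z := by noncomm_ring
    rw [e, hxy]; simp
  rw [← hu] at hxu
  have hux : (↑u : R) * x = 1 := u.inv_eq_of_mul_eq_one_left hxu ▸ u.mul_inv
  have hy_u : y = ↑u := by rw [← one_mul y, ← hux, mul_assoc, hxy, mul_one]
  rw [hy_u]; exact hux
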